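/- Let M be the 3-valued matrix with values {1,2,3}, designated values {1,2}, negation ¬1=3, ¬2=2, ¬3=1, and binary operations (x,y) ↦ (x∨y, x∧dy, x⊃y): (1,1)↦(2,1,2), (1,2)↦(1,1,1), (1,3)↦(1,3,3), (2,1)↦(2,2,1), (2,2)↦(1,2,1), (2,3)↦(2,3,3), (3,1)↦(1,3,1), (3,2)↦(2,3,1), (3,3)↦(3,3,1). Then M validates all axiom schemes C1–C15, the designated values are closed under modus ponens for ⊃, and there exist values a,b such that ¬(a∨b) ⊃ ¬(b∨a) is not designated. Consequently the scheme ¬(α∨β) ⊃ ¬(β∨α) (axiom D13) is not derivable in the system C. -/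
import Mathlib


inductive Fm where
  | atom : Nat → Fm
  | neg : Fm → Fm
  | or : Fm → Fm → Fm
  | dand : Fm → Fm → Fm
  | dimp : Fm → Fm → Fm

inductive CProv : Fm → Prop where
  | mp {a b : Fm} : CProv (.dimp a b) → CProv a → CProv b
  | ax1 {a b : Fm} : CProv (.dimp (a) (.dimp (b) (a)))
  | ax2 {a b c : Fm} : CProv (.dimp (.dimp (a) (.dimp (b) (c))) (.dimp (.dimp (a) (b)) (.dimp (a) (c))))
  | ax3 {a b : Fm} : CProv (.dimp (.dand (a) (b)) (a))
  | ax4 {a b : Fm} : CProv (.dimp (.dand (a) (b)) (b))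
  | ax5 {a b : Fm} : CProv (.dimp (a) (.dimp (b) (.dand (a) (b))))
  | ax6 {a b : Fm} : CProv (.dimp (a) (.or (a) (b)))
  | ax7 {a b : Fm} : CProv (.dimp (b) (.or (a) (b)))
  | ax8 {a b c : Fm} : CProv (.dimp (.dimp (a) (c)) (.dimp (.dimp (b) (c)) (.dimp (.or (a) (b)) (c))))
  | ax9 {a b : Fm} : CProv (.or (a) (.dimp (a) (b)))
  | ax10 {a : Fm} : CProv (.neg (.dand (.neg (a)) (.dand (.neg (.neg (a))) (.neg (.or (a) (.neg (a)))))))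
  | ax11 {a b c : Fm} : CProv (.dimp (.neg (.dand (.neg (a)) (.dand (.neg (b)) (.neg (.or (a) (b)))))) (.neg (.dand (.neg (a)) (.dand (.neg (b)) (.dand (.neg (c)) (.neg (.or (a) (.or (b) (c)))))))))
  | ax12 {a b c : Fm} : CProv (.dimp (.neg (.dand (.neg (a)) (.dand (.neg (b)) (.dand (.neg (c)) (.neg (.or (a) (.or (b) (c)))))))) (.neg (.dand (.neg (a)) (.dand (.neg (c)) (.dand (.neg (b)) (.neg (.or (a) (.or (c) (b)))))))))
  | ax13 {a b c : Fm} : CProv (.dimp (.neg (.dand (.neg (a)) (.dand (.neg (b)) (.dand (.neg (c)) (.neg (.or (a) (.or (b) (c)))))))) (.dimp (.or (a) (.or (b) (.neg (c)))) (.or (a) (b))))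
  | ax14 {a b : Fm} : CProv (.dimp (.neg (.dand (.neg (a)) (.neg (b)))) (.or (a) (b)))
  | ax15 {a b : Fm} : CProv (.dimp (.or (a) (.or (b) (.neg (b)))) (.neg (.dand (.neg (a)) (.neg (.or (b) (.neg (b)))))))

def vneg : Fin 3 → Fin 3 := ![2, 1, 0]

def vor : Fin 3 → Fin 3 → Fin 3 := ![![1, 0, 0], ![1, 0, 1], ![0, 1, 2]]

def vand : Fin 3 → Fin 3 → Fin 3 := ![![0, 0, 2], ![1, 1, 2], ![2, 2, 2]]

def vimp : Fin 3 → Fin 3 → Fin 3 := ![![1, 0, 2], ![0, 0, 2], ![0, 0, 0]]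

def Des (x : Fin 3) : Prop := x ≠ 2

instance (x : Fin 3) : Decidable (Des x) := by unfold Des; infer_instance

def evalFm (v : Nat → Fin 3) : Fm → Fin 3
  | .atom n => v n
  | .neg a => vneg (evalFm v a)
  | .or a b => vor (evalFm v a) (evalFm v b)
  | .dand a b => vand (evalFm v a) (evalFm v b)
  | .dimp a b => vimp (evalFm v a) (evalFm v b)

lemma sound {φ : Fm} (h : CProv φ) (v : Nat → Fin 3) : Des (evalFm v φ) := by
  induction h with
  | @mp a b _ _ ih1 ih2 =>
      simp only [evalFm] at ih1
      revert ih1 ih2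
      generalize evalFm v a = x; generalize evalFm v b = y
      revert x y; decide
  | _ => simp only [evalFm]; first
      | (generalize evalFm v _ = x; revert x; decide)
      | (generalize evalFm v _ = x; generalize evalFm v _ = y; revert x y; decide)
      | (generalize evalFm v _ = x; generalize evalFm v _ = y; generalize evalFm v _ = z; revert x y z; decide)

theorem stmt2 :
    (∀ a b : Fin 3, Des (vimp (a) (vimp (b) (a)))) ∧
    (∀ a b c : Fin 3, Des (vimp (vimp (a) (vimp (b) (c))) (vimp (vimp (a) (b)) (vimp (a) (c))))) ∧
    (∀ a b : Fin 3, Des (vimp (vand (a) (b)) (a))) ∧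
    (∀ a b : Fin 3, Des (vimp (vand (a) (b)) (b))) ∧
    (∀ a b : Fin 3, Des (vimp (a) (vimp (b) (vand (a) (b))))) ∧
    (∀ a b : Fin 3, Des (vimp (a) (vor (a) (b)))) ∧
    (∀ a b : Fin 3, Des (vimp (b) (vor (a) (b)))) ∧
    (∀ a b c : Fin 3, Des (vimp (vimp (a) (c)) (vimp (vimp (b) (c)) (vimp (vor (a) (b)) (c))))) ∧
    (∀ a b : Fin 3, Des (vor (a) (vimp (a) (b)))) ∧
    (∀ a : Fin 3, Des (vneg (vand (vneg (a)) (vand (vneg (vneg (a))) (vneg (vor (a) (vneg (a)))))))) ∧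
    (∀ a b c : Fin 3, Des (vimp (vneg (vand (vneg (a)) (vand (vneg (b)) (vneg (vor (a) (b)))))) (vneg (vand (vneg (a)) (vand (vneg (b)) (vand (vneg (c)) (vneg (vor (a) (vor (b) (c)))))))))) ∧
    (∀ a b c : Fin 3, Des (vimp (vneg (vand (vneg (a)) (vand (vneg (b)) (vand (vneg (c)) (vneg (vor (a) (vor (b) (c)))))))) (vneg (vand (vneg (a)) (vand (vneg (c)) (vand (vneg (b)) (vneg (vor (a) (vor (c) (b)))))))))) ∧
    (∀ a b c : Fin 3, Des (vimp (vneg (vand (vneg (a)) (vand (vneg (b)) (vand (vneg (c)) (vneg (vor (a) (vor (b) (c)))))))) (vimp (vor (a) (vor (b) (vneg (c)))) (vor (a) (b))))) ∧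
    (∀ a b : Fin 3, Des (vimp (vneg (vand (vneg (a)) (vneg (b)))) (vor (a) (b)))) ∧
    (∀ a b : Fin 3, Des (vimp (vor (a) (vor (b) (vneg (b)))) (vneg (vand (vneg (a)) (vneg (vor (b) (vneg (b)))))))) ∧
    (∀ x y : Fin 3, Des x → Des (vimp x y) → Des y) ∧
    (∃ a b : Fin 3, ¬ Des (vimp (vneg (vor (a) (b))) (vneg (vor (b) (a))))) ∧
    ¬ (∀ a b : Fm, CProv (.dimp (.neg (.or (a) (b))) (.neg (.or (b) (a))))) := by
  refine ⟨by decide, by decide, by decide, by decide, by decide, by decide, by decide,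
    by decide, by decide, by decide, by decide, by decide, by decide, by decide, by decide,
    by decide, by decide, ?_⟩
  intro h
  exact absurd (sound (h (.atom 0) (.atom 1)) (fun n => if n = 0 then 1 else 0)) (by decide)
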